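/- The associated order equals the fixed points of the integral group ring: A_H = O_L[N]^G. -/

import Mathlib

/-! Common setting: `L/K` a finite unramified (hence Galois, with cyclic group
`G = Gal(L/K)`) extension of `p`-adic fields, `λ : G → Perm G` the
left-translation embedding, `N` a regular subgroup of `Perm G` normalised by
`λ(G)` (given abstractly via an injective `ι : N →* Perm G` with regular image,
the normalisation encoded by the conjugation action `c : G →* MulAut N` with
`ι (c g n) = λ g * ι n * (λ g)⁻¹`), and `H = L[N]^G` the Greither–Pareigis Hopf
algebra, acting on `L` by `(Σ cₙ n) · x = Σ cₙ ((ι n)⁻¹ 1)(x)`.  Valuation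
rings are the integral closures of `ℤ_[p]`; `L/K` unramified is expressed by
saying that the maximal ideal of `O_K` generates the maximal ideal of `O_L`. -/

noncomputable section

variable (p : ℕ) [Fact p.Prime]
variable (K L : Type) [Field K] [Field L]
  [Algebra ℚ_[p] K] [FiniteDimensional ℚ_[p] K]
  [Algebra ℚ_[p] L] [FiniteDimensional ℚ_[p] L]
  [Algebra ℤ_[p] K] [IsScalarTower ℤ_[p] ℚ_[p] K]
  [Algebra ℤ_[p] L] [IsScalarTower ℤ_[p] ℚ_[p] L]
  [Algebra K L] [IsScalarTower ℚ_[p] K L] [IsScalarTower ℤ_[p] K L]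
  [FiniteDimensional K L] [IsGalois K L]

/-- The inclusion `O_K → O_L` induced by `K → L`. -/
def OKtoOL : (integralClosure ℤ_[p] K) →ₐ[ℤ_[p]] (integralClosure ℤ_[p] L) :=
  AlgHom.codRestrict
    ((IsScalarTower.toAlgHom ℤ_[p] K L).comp (integralClosure ℤ_[p] K).val)
    (integralClosure ℤ_[p] L)
    (fun a => a.2.map (IsScalarTower.toAlgHom ℤ_[p] K L))

instance : Algebra (integralClosure ℤ_[p] K) (integralClosure ℤ_[p] L) :=
  (OKtoOL p K L).toRingHom.toAlgebra

/-- `L/K` is unramified: the maximal ideal of `O_K` generates the maximal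
ideal of `O_L`. -/
def IsUnramifiedExt [IsLocalRing (integralClosure ℤ_[p] K)]
    [IsLocalRing (integralClosure ℤ_[p] L)] : Prop :=
  Ideal.map (algebraMap (integralClosure ℤ_[p] K) (integralClosure ℤ_[p] L))
      (IsLocalRing.maximalIdeal (integralClosure ℤ_[p] K)) =
    IsLocalRing.maximalIdeal (integralClosure ℤ_[p] L)

variable (N : Type) [Group N] [Fintype N]
  (ι : N →* Equiv.Perm (L ≃ₐ[K] L))
  (c : (L ≃ₐ[K] L) →* MulAut N)

/-- The left-translation embedding `λ : G → Perm G`. -/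
def lam : (L ≃ₐ[K] L) →* Equiv.Perm (L ≃ₐ[K] L) :=
  MulAction.toPermHom _ _

/-- The semilinear action of `g ∈ G` on the group algebra `L[N]`: on
coefficients as the Galois automorphism `g`, on group elements by conjugation
through `λ` (encoded by `c`). -/
def galTwist (g : L ≃ₐ[K] L) (z : MonoidAlgebra L N) : MonoidAlgebra L N :=
  MonoidAlgebra.ofCoeff (Finsupp.mapDomain (c g) (Finsupp.mapRange g (map_zero g) z.coeff))

/-- The Hopf–Galois action of `H = L[N]^G` on `L`:
`(Σ cₙ n) · x = Σ cₙ ((ι n)⁻¹ 1)(x)`. -/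
def hopfAct (z : MonoidAlgebra L N) (x : L) : L :=
  z.coeff.sum fun n cn => cn * ((ι n)⁻¹ (1 : L ≃ₐ[K] L)) x

/-- The fixed points `H = L[N]^G`. -/
def Hset : Set (MonoidAlgebra L N) :=
  {z | ∀ g : L ≃ₐ[K] L, galTwist K L N c g z = z}

/-- The associated order `A_H = {h ∈ H | h · O_L ⊆ O_L}`. -/
def AH : Set (MonoidAlgebra L N) :=
  {z | z ∈ Hset K L N c ∧
    ∀ x ∈ (integralClosure ℤ_[p] L : Set L),
      hopfAct K L N ι z x ∈ (integralClosure ℤ_[p] L : Set L)}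

/-- `O_L[N]^G`: the `G`-fixed elements of the integral group ring `O_L[N]`. -/
def OLN : Set (MonoidAlgebra L N) :=
  {z | z ∈ Hset K L N c ∧ ∀ n : N, z.coeff n ∈ integralClosure ℤ_[p] L}

/-- `O_L` is a free `A_H`-module (necessarily of rank one). -/
def IsFreeRankOne : Prop :=
  ∃ b ∈ (integralClosure ℤ_[p] L : Set L), ∀ x ∈ (integralClosure ℤ_[p] L : Set L),
    ∃! z : MonoidAlgebra L N, z ∈ AH p K L N ι c ∧ hopfAct K L N ι z b = x

end

/-! Since `L/K` is unramified, reducing an `O_K`-basis `(xᵢ)` of `O_L` modulo the maximal ideal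
of `O_K` gives a basis of the finite, hence separable, residue field extension, whose
discriminant is nonzero. So the trace matrix of the basis is invertible over `O_K`, and its trace-dual basis
`(yᵢ)` lies in `O_L`. Dedekind's independence of characters turns the expansion
`w = ∑ᵢ Tr(yᵢ w) xᵢ` into `∑ᵢ σ(xᵢ) τ(yᵢ) = δ_{σ,τ}` for `σ, τ ∈ G`. For `z = ∑ cₙ n` and
`σₙ = n⁻¹(1_G)`, which is injective in `n` because `N` is regular, this recovers the coefficients
as `cₙ = ∑ᵢ (z · yᵢ) σₙ(xᵢ)`, so `z · O_L ⊆ O_L` forces `cₙ ∈ O_L`. The converse holds because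
`O_L` is `G`-stable. -/

open IsLocalRing

namespace Module.Basis

variable {R S ι : Type*} [CommRing R] [CommRing S] [Algebra R S] [Fintype ι] [DecidableEq ι]

theorem sum_trace_mul_smul_eq (b : Basis ι R S) {y : ι → S}
    (hy : ∀ i j, Algebra.trace R S (b i * y j) = if i = j then 1 else 0) (w : S) :
    ∑ i, Algebra.trace R S (y i * w) • b i = w := by
  have hcoord : ∀ i, Algebra.trace R S (y i * w) = b.repr w i := by
    intro i
    conv_lhs => rw [mul_comm, ← b.sum_repr w]
    simp only [Finset.sum_mul, smul_mul_assoc, map_sum, map_smul, hy, smul_eq_mul, mul_ite,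
      mul_one, mul_zero, Finset.sum_ite_eq', Finset.mem_univ, if_true]
  simp only [hcoord, b.sum_repr]

theorem exists_trace_mul_eq_ite (b : Basis ι R S) (hb : IsUnit (Algebra.traceMatrix R b).det) :
    ∃ y : ι → S, ∀ i j, Algebra.trace R S (b i * y j) = if i = j then 1 else 0 := by
  set T := Algebra.traceMatrix R b
  refine ⟨fun j => ∑ k, T⁻¹ j k • b k, fun i j => ?_⟩
  calc Algebra.trace R S (b i * ∑ k, T⁻¹ j k • b k) = (T⁻¹ * T) j i := by
        rw [mul_comm, Finset.sum_mul]
        simp only [smul_mul_assoc, map_sum, map_smul, smul_eq_mul, Matrix.mul_apply, T,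
          Algebra.traceMatrix_apply, Algebra.traceForm_apply]
    _ = if i = j then 1 else 0 := by
        rw [Matrix.nonsing_inv_mul _ hb, Matrix.one_apply]
        exact if_congr eq_comm rfl rfl

end Module.Basis

attribute [local instance] Ideal.Quotient.field in
theorem isUnit_det_traceMatrix_of_isMaximal_map {R S ι : Type*} [CommRing R] [CommRing S]
    [Algebra R S] [Fintype ι] [DecidableEq ι] [IsLocalRing R] [Module.Free R S]
    [Module.Finite R S] [Finite (ResidueField R)]
    [((maximalIdeal R).map (algebraMap R S)).IsMaximal] (b : Module.Basis ι R S) :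
    IsUnit (Algebra.traceMatrix R b).det := by
  have : Module.Finite (R ⧸ maximalIdeal R) (S ⧸ (maximalIdeal R).map (algebraMap R S)) :=
    Module.Finite.of_restrictScalars_finite R _ _
  have : Finite (R ⧸ maximalIdeal R) := ‹Finite (ResidueField R)›
  have hmap : Algebra.traceMatrix (R ⧸ maximalIdeal R) (basisQuotient b) =
      (Algebra.traceMatrix R b).map (Ideal.Quotient.mk _) := by
    ext i j
    simp only [Algebra.traceMatrix_apply, Algebra.traceForm_apply, basisQuotient_apply,
      Matrix.map_apply, ← map_mul, Algebra.trace_quotient_mk]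
  have hdiscr := Algebra.discr_not_zero_of_basis _ (basisQuotient b)
  rw [Algebra.discr_def, hmap, ← RingHom.mapMatrix_apply, ← RingHom.map_det, Ne,
    Ideal.Quotient.eq_zero_iff_mem] at hdiscr
  exact notMem_maximalIdeal.mp hdiscr

theorem sum_algEquiv_mul_algEquiv_eq_ite {K L ι : Type*} [Field K] [Field L] [Algebra K L]
    [FiniteDimensional K L] [IsGalois K L] [Fintype ι] [DecidableEq (L ≃ₐ[K] L)] {X Y : ι → L}
    (hXY : ∀ w, ∑ i, Algebra.trace K L (Y i * w) • X i = w) (σ τ : L ≃ₐ[K] L) :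
    ∑ i, σ (X i) * τ (Y i) = if σ = τ then 1 else 0 := by
  set c : (L ≃ₐ[K] L) → L := fun τ => ∑ i, σ (X i) * τ (Y i)
  have hc : ∀ w, ∑ τ, c τ * τ w = σ w := by
    intro w
    conv_rhs => rw [← hXY w, map_sum]
    simp_rw [map_smul, Algebra.smul_def, trace_eq_sum_automorphisms, Finset.sum_mul, c,
      Finset.sum_mul]
    rw [Finset.sum_comm]
    refine Finset.sum_congr rfl fun i _ => Finset.sum_congr rfl fun τ _ => ?_
    rw [map_mul, mul_assoc, mul_comm]
  have hli := (linearIndependent_algHom_toLinearMap K L L).comp _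
    (algEquivEquivAlgHom K L).injective
  have hzero : ∑ τ, (c τ - if σ = τ then 1 else 0) • (τ : L →ₐ[K] L).toLinearMap = 0 := by
    ext w
    simp [sub_smul, Finset.sum_sub_distrib, hc, ite_smul, ite_apply]
  exact sub_eq_zero.mp (Fintype.linearIndependent_iff.mp hli _ hzero τ)

theorem algEquiv_apply_mem_integralClosure {R K L : Type*} [CommRing R] [Field K] [Field L]
    [Algebra R K] [Algebra R L] [Algebra K L] [IsScalarTower R K L] (σ : L ≃ₐ[K] L) {x : L}
    (hx : x ∈ integralClosure R L) : σ x ∈ integralClosure R L :=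
  IsIntegral.map ((σ : L →ₐ[K] L).restrictScalars R) hx

section PadicIntegers

variable (p : ℕ) [Fact p.Prime] (M : Type) [Field M] [Algebra ℚ_[p] M]
  [FiniteDimensional ℚ_[p] M] [Algebra ℤ_[p] M] [IsScalarTower ℤ_[p] ℚ_[p] M]

instance : FaithfulSMul ℤ_[p] (integralClosure ℤ_[p] M) :=
  have : FaithfulSMul ℤ_[p] M := FaithfulSMul.trans ℤ_[p] ℚ_[p] M
  FaithfulSMul.tower_bot ℤ_[p] (integralClosure ℤ_[p] M) M

instance : Module.Finite ℤ_[p] (integralClosure ℤ_[p] M) :=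
  IsIntegralClosure.finite ℤ_[p] ℚ_[p] M _

instance : IsDedekindDomain (integralClosure ℤ_[p] M) :=
  integralClosure.isDedekindDomain ℤ_[p] ℚ_[p] M

instance : IsFractionRing (integralClosure ℤ_[p] M) M :=
  integralClosure.isFractionRing_of_finite_extension ℚ_[p] M

instance [IsLocalRing (integralClosure ℤ_[p] M)] :
    Finite (ResidueField (integralClosure ℤ_[p] M)) :=
  ResidueField.finite_of_finite (Finite.of_equiv _ (PadicInt.residueField (p := p)).symm.toEquiv)

end PadicIntegers

section Extension

variable (p : ℕ) [Fact p.Prime] (K L : Type) [Field K] [Field L]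
  [Algebra ℚ_[p] K] [FiniteDimensional ℚ_[p] K]
  [Algebra ℚ_[p] L] [FiniteDimensional ℚ_[p] L]
  [Algebra ℤ_[p] K] [IsScalarTower ℤ_[p] ℚ_[p] K]
  [Algebra ℤ_[p] L] [IsScalarTower ℤ_[p] ℚ_[p] L]
  [Algebra K L] [IsScalarTower ℤ_[p] K L]

local notation "𝒪K" => integralClosure ℤ_[p] K
local notation "𝒪L" => integralClosure ℤ_[p] L

instance : IsScalarTower ℤ_[p] 𝒪K 𝒪L :=
  .of_algebraMap_eq fun x => ((OKtoOL p K L).commutes x).symm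

instance : IsScalarTower 𝒪K 𝒪L L :=
  IsScalarTower.of_algebraMap_eq (R := 𝒪K) (S := 𝒪L) (A := L) fun _ => rfl

instance : FaithfulSMul 𝒪K 𝒪L := FaithfulSMul.tower_bot 𝒪K 𝒪L L

instance : Module.Finite 𝒪K 𝒪L := Module.Finite.of_restrictScalars_finite ℤ_[p] _ _

instance : IsIntegralClosure 𝒪L 𝒪K L := IsIntegralClosure.tower_top (R := ℤ_[p])

theorem exists_integral_trace_dual_of_isUnramifiedExt [FiniteDimensional K L] [IsLocalRing 𝒪K]
    [IsLocalRing 𝒪L] (hur : IsUnramifiedExt p K L) :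
    ∃ (ι : Type) (_ : Fintype ι) (X Y : ι → L), (∀ i, X i ∈ 𝒪L) ∧ (∀ i, Y i ∈ 𝒪L) ∧
      ∀ w, ∑ i, Algebra.trace K L (Y i * w) • X i = w := by
  classical
  have : ((maximalIdeal 𝒪K).map (algebraMap 𝒪K 𝒪L)).IsMaximal := hur ▸ maximalIdeal.isMaximal _
  have := IsIntegralClosure.isLocalization 𝒪K K L 𝒪L
  have : Module.Free 𝒪K 𝒪L := Module.free_of_finite_type_torsion_free'
  let b := Module.Free.chooseBasis 𝒪K 𝒪L
  obtain ⟨y, hy⟩ := b.exists_trace_mul_eq_ite (isUnit_det_traceMatrix_of_isMaximal_map b)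
  let b' := b.localizationLocalization K (nonZeroDivisors 𝒪K) L
  have hb' : ∀ i, b' i = b i := b.localizationLocalization_apply _ _ _
  have hdual : ∀ i j, Algebra.trace K L (b' i * y j) = if i = j then 1 else 0 := fun i j => by
    rw [hb']
    change Algebra.trace K L (algebraMap 𝒪L L (b i * y j)) = _
    rw [Algebra.trace_localization 𝒪K (nonZeroDivisors 𝒪K), hy, apply_ite (algebraMap 𝒪K K),
      map_one, map_zero]
  refine ⟨_, inferInstance, fun i => b i, fun i => y i, fun i => (b i).2, fun i => (y i).2, ?_⟩
  simpa only [hb'] using b'.sum_trace_mul_smul_eq hdual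

end Extension

theorem injective_inv_apply_of_card_eq_of_transitive {N G : Type*} [Group N] [Finite N]
    (ι : N →* Equiv.Perm G) (hcard : Nat.card N = Nat.card G)
    (htrans : ∀ x y : G, ∃ n, ι n x = y) (g : G) : Function.Injective fun n => (ι n)⁻¹ g := by
  have horbit : Function.Injective fun n => ι n g :=
    (Function.Surjective.bijective_of_nat_card_le (htrans g) hcard.le).injective
  intro n m h
  have : ι n⁻¹ g = ι m⁻¹ g := by simpa only [map_inv] using h
  exact inv_injective (horbit this)

section HopfAction

variable {K L N : Type} [Field K] [Field L] [Algebra K L] [Group N] [Fintype N]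
  (ι : N →* Equiv.Perm (L ≃ₐ[K] L))

theorem hopfAct_eq_sum (z : MonoidAlgebra L N) (x : L) :
    hopfAct K L N ι z x = ∑ n, z.coeff n * (ι n)⁻¹ 1 x :=
  Finsupp.sum_fintype _ _ fun _ => zero_mul _

theorem coeff_eq_sum_hopfAct_mul [FiniteDimensional K L] [IsGalois K L] {I : Type*} [Fintype I]
    {X Y : I → L} (hXY : ∀ w, ∑ i, Algebra.trace K L (Y i * w) • X i = w)
    (hinj : Function.Injective fun n => (ι n)⁻¹ 1) (z : MonoidAlgebra L N) (n₀ : N) :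
    z.coeff n₀ = ∑ i, hopfAct K L N ι z (Y i) * (ι n₀)⁻¹ 1 (X i) := by
  classical
  simp_rw [hopfAct_eq_sum, Finset.sum_mul]
  rw [Finset.sum_comm]
  simp_rw [mul_assoc, ← Finset.mul_sum, mul_comm ((ι _)⁻¹ 1 (Y _)),
    sum_algEquiv_mul_algEquiv_eq_ite hXY, hinj.eq_iff, mul_ite, mul_one, mul_zero]
  simp

theorem hopfAct_mem_of_coeff_mem {R : Type*} [CommRing R] [Algebra R L] {A : Subalgebra R L}
    (hA : ∀ σ : L ≃ₐ[K] L, ∀ x ∈ A, σ x ∈ A) {z : MonoidAlgebra L N} (hz : ∀ n, z.coeff n ∈ A)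
    {x : L} (hx : x ∈ A) : hopfAct K L N ι z x ∈ A := by
  rw [hopfAct_eq_sum]
  exact Subalgebra.sum_mem _ fun n _ => Subalgebra.mul_mem _ (hz n) (hA _ x hx)

theorem coeff_mem_of_hopfAct_mem [FiniteDimensional K L] [IsGalois K L] {I : Type*} [Fintype I]
    {X Y : I → L} (hXY : ∀ w, ∑ i, Algebra.trace K L (Y i * w) • X i = w)
    (hinj : Function.Injective fun n => (ι n)⁻¹ 1) {R : Type*} [CommRing R] [Algebra R L]
    {A : Subalgebra R L} (hA : ∀ σ : L ≃ₐ[K] L, ∀ x ∈ A, σ x ∈ A) (hX : ∀ i, X i ∈ A)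
    (hY : ∀ i, Y i ∈ A) {z : MonoidAlgebra L N} (hz : ∀ x ∈ A, hopfAct K L N ι z x ∈ A)
    (n : N) : z.coeff n ∈ A := by
  rw [coeff_eq_sum_hopfAct_mul ι hXY hinj]
  exact Subalgebra.sum_mem _ fun i _ => Subalgebra.mul_mem _ (hz _ (hY i)) (hA _ _ (hX i))

end HopfAction

theorem statement4_general
    (p : ℕ) [Fact p.Prime]
    (K L : Type) [Field K] [Field L]
    [Algebra ℚ_[p] K] [FiniteDimensional ℚ_[p] K]
    [Algebra ℚ_[p] L] [FiniteDimensional ℚ_[p] L]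
    [Algebra ℤ_[p] K] [IsScalarTower ℤ_[p] ℚ_[p] K]
    [Algebra ℤ_[p] L] [IsScalarTower ℤ_[p] ℚ_[p] L]
    [Algebra K L] [IsScalarTower ℤ_[p] K L]
    [FiniteDimensional K L] [IsGalois K L]
    [IsLocalRing (integralClosure ℤ_[p] K)] [IsLocalRing (integralClosure ℤ_[p] L)]
    (hur : IsUnramifiedExt p K L)
    (N : Type) [Group N] [Fintype N]
    (ι : N →* Equiv.Perm (L ≃ₐ[K] L))
    (hcard : Nat.card N = Nat.card (L ≃ₐ[K] L))
    (htrans : ∀ x y : L ≃ₐ[K] L, ∃ n : N, ι n x = y)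
    (c : (L ≃ₐ[K] L) →* MulAut N) :
    AH p K L N ι c = OLN p K L N c := by
  obtain ⟨I, _, X, Y, hX, hY, hXY⟩ := exists_integral_trace_dual_of_isUnramifiedExt p K L hur
  have hinj := injective_inv_apply_of_card_eq_of_transitive ι hcard htrans 1
  have hstable : ∀ σ : L ≃ₐ[K] L, ∀ x ∈ integralClosure ℤ_[p] L, σ x ∈ integralClosure ℤ_[p] L :=
    fun σ _ => algEquiv_apply_mem_integralClosure σ
  ext z
  exact ⟨fun ⟨hH, hz⟩ => ⟨hH, coeff_mem_of_hopfAct_mem ι hXY hinj hstable hX hY hz⟩,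
    fun ⟨hH, hz⟩ => ⟨hH, fun x hx => hopfAct_mem_of_coeff_mem ι hstable hz hx⟩⟩

/-- for an unramified extension `L/K` of `p`-adic fields,
`A_H = O_L[N]^G`. -/
theorem statement4
    (p : ℕ) [Fact p.Prime]
    (K L : Type) [Field K] [Field L]
    [Algebra ℚ_[p] K] [FiniteDimensional ℚ_[p] K]
    [Algebra ℚ_[p] L] [FiniteDimensional ℚ_[p] L]
    [Algebra ℤ_[p] K] [IsScalarTower ℤ_[p] ℚ_[p] K]
    [Algebra ℤ_[p] L] [IsScalarTower ℤ_[p] ℚ_[p] L]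
    [Algebra K L] [IsScalarTower ℚ_[p] K L] [IsScalarTower ℤ_[p] K L]
    [FiniteDimensional K L] [IsGalois K L]
    [IsLocalRing (integralClosure ℤ_[p] K)] [IsLocalRing (integralClosure ℤ_[p] L)]
    (hur : IsUnramifiedExt p K L)
    (N : Type) [Group N] [Fintype N]
    (ι : N →* Equiv.Perm (L ≃ₐ[K] L))
    (hι : Function.Injective ι)
    (hcard : Nat.card N = Nat.card (L ≃ₐ[K] L))
    (htrans : ∀ x y : L ≃ₐ[K] L, ∃ n : N, ι n x = y)
    (c : (L ≃ₐ[K] L) →* MulAut N)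
    (hc : ∀ (g : L ≃ₐ[K] L) (n : N),
      ι (c g n) = lam K L g * ι n * (lam K L g)⁻¹) :
    AH p K L N ι c = OLN p K L N c :=
  statement4_general p K L hur N ι hcard htrans c
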